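/- arXiv:2601.22369 — 2 statements merged into one kernel-verified Lean document; each statement's English description precedes it below -/
import Mathlib

section
/- (Agreement for Algorithm 1, property P1.) For every input assignment init : Fin n → Bool, every crash pattern with at most one faulty process, and every delivery pattern consistent with it, all surviving processes reach the same decision: for all processes p and p' with crash p = none and crash p' = none, dec p = dec p'. -/
open scoped Classical

/-- Round-1 state of process `p` in Algorithm 1: `true` (internal:a) iff `p`
received every round-0 message and every process proposed commit. -/
noncomputable def sState {n : ℕ} (init : Fin n → Bool)
    (delivered : Fin 2 → Fin n → Fin n → Prop) (p : Fin n) : Bool :=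
  if (∀ q : Fin n, delivered 0 q p) ∧ (∀ q : Fin n, init q = true) then true else false

/-- Round-2 decision of process `p` in Algorithm 1: commit (`true`) iff every
round-1 message that `p` receives carries state internal:a. -/
noncomputable def decA {n : ℕ} (init : Fin n → Bool)
    (delivered : Fin 2 → Fin n → Fin n → Prop) (p : Fin n) : Bool :=
  if ∀ q : Fin n, delivered 1 q p → sState init delivered q = true then true else false

/-- The delivery pattern is consistent with the crash pattern. -/
def consistentDel {n : ℕ} (crash : Fin n → Option (Fin 2))
    (delivered : Fin 2 → Fin n → Fin n → Prop) : Prop :=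
  (∀ (t : Fin 2) (q p : Fin n),
      (crash q = none ∨ ∃ s : Fin 2, crash q = some s ∧ t.val < s.val) → delivered t q p) ∧
  (∀ (t : Fin 2) (q p : Fin n) (s : Fin 2), crash q = some s → s.val < t.val →
      ¬ delivered t q p)

/-!
If some process crashes in round 1, it is the only faulty process, so in round 2 every process
hears from exactly the other processes and all of them see the same states. Otherwise every
round-1 message arrives, so all states equal "everyone proposed commit"; a surviving process
hears at least its own round-2 message, hence decides exactly that value.
-/

section Algorithm1

variable {n : ℕ} {init : Fin n → Bool} {crash : Fin n → Option (Fin 2)}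
  {delivered : Fin 2 → Fin n → Fin n → Prop}

theorem eq_of_card_filter_crash_le_one
    (hcard : (Finset.univ.filter fun q => crash q ≠ none).card ≤ 1)
    {q r : Fin n} (hq : crash q ≠ none) (hr : crash r ≠ none) : q = r :=
  Finset.card_le_one.mp hcard q (by simpa using hq) r (by simpa using hr)

namespace consistentDel

theorem delivered_of_crash_eq_none (hcons : consistentDel crash delivered) {t : Fin 2}
    {q : Fin n} (p : Fin n) (hq : crash q = none) : delivered t q p :=
  hcons.1 t q p (Or.inl hq)

theorem delivered_zero_of_crash_ne_some_zero (hcons : consistentDel crash delivered)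
    {q : Fin n} (p : Fin n) (hq : crash q ≠ some 0) : delivered 0 q p := by
  refine hcons.1 0 q p ?_
  rcases hs : crash q with _ | s
  · exact Or.inl rfl
  · refine Or.inr ⟨s, rfl, ?_⟩
    have : s ≠ 0 := fun h => hq (h ▸ hs)
    omega

theorem delivered_one_iff_ne_of_crash_eq_some_zero (hcons : consistentDel crash delivered)
    (hcard : (Finset.univ.filter fun q => crash q ≠ none).card ≤ 1)
    {r : Fin n} (hr : crash r = some 0) (q p : Fin n) : delivered 1 q p ↔ q ≠ r := by
  constructor
  · rintro h rfl
    exact hcons.2 1 q p 0 hr (by decide) h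
  · intro hqr
    refine hcons.delivered_of_crash_eq_none p ?_
    by_contra hq
    exact hqr (eq_of_card_filter_crash_le_one hcard hq (by simp [hr]))

end consistentDel

theorem sState_of_forall_delivered_zero {p : Fin n} (h : ∀ q, delivered 0 q p) :
    sState init delivered p = decide (∀ q, init q = true) := by
  simp only [sState, h]
  split <;> simp_all

theorem decA_congr {p p' : Fin n} (h : ∀ q, delivered 1 q p ↔ delivered 1 q p') :
    decA init delivered p = decA init delivered p' := by
  simp only [decA, h]

theorem decA_of_forall_sState_eq {b : Bool} (hs : ∀ q, sState init delivered q = b)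
    {q p : Fin n} (hqp : delivered 1 q p) : decA init delivered p = b := by
  simp only [decA, hs]
  cases b
  · simpa using ⟨q, hqp⟩
  · simp

end Algorithm1

theorem stmt_12_general (n : ℕ) :
    ∀ (init : Fin n → Bool) (crash : Fin n → Option (Fin 2)),
      (Finset.univ.filter fun q => crash q ≠ none).card ≤ 1 →
      ∀ delivered : Fin 2 → Fin n → Fin n → Prop,
        consistentDel crash delivered →
        ∀ p p' : Fin n, crash p = none → crash p' = none →
          decA init delivered p = decA init delivered p' := by
  intro init crash hcard delivered hcons p p' hp hp'
  by_cases hcrash0 : ∃ r, crash r = some 0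
  · obtain ⟨r, hr⟩ := hcrash0
    exact decA_congr fun q =>
      (hcons.delivered_one_iff_ne_of_crash_eq_some_zero hcard hr q p).trans
        (hcons.delivered_one_iff_ne_of_crash_eq_some_zero hcard hr q p').symm
  · push Not at hcrash0
    have hs : ∀ q, sState init delivered q = decide (∀ q, init q = true) := fun q =>
      sState_of_forall_delivered_zero fun r =>
        hcons.delivered_zero_of_crash_ne_some_zero q (hcrash0 r)
    rw [decA_of_forall_sState_eq hs (hcons.delivered_of_crash_eq_none p hp),
      decA_of_forall_sState_eq hs (hcons.delivered_of_crash_eq_none p' hp')]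

/-- Agreement for Algorithm 1, property P1. -/
theorem stmt_12 (n : ℕ) (hn : 1 ≤ n) :
    ∀ (init : Fin n → Bool) (crash : Fin n → Option (Fin 2)),
      (Finset.univ.filter fun q => crash q ≠ none).card ≤ 1 →
      ∀ delivered : Fin 2 → Fin n → Fin n → Prop,
        consistentDel crash delivered →
        ∀ p p' : Fin n, crash p = none → crash p' = none →
          decA init delivered p = decA init delivered p' :=
  stmt_12_general n
end

section
/- (Abort validity for Algorithm 1, property P3.) If some process q₀ has init q₀ = false (it proposes abort), then for every crash pattern with at most one faulty process and every delivery pattern consistent with it, every surviving process decides abort: dec p = false for every p with crash p = none. -/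
open scoped Classical

theorem sState_eq_false_of_init_eq_false {n : ℕ} {init : Fin n → Bool}
    (delivered : Fin 2 → Fin n → Fin n → Prop) {q₀ : Fin n} (hq₀ : init q₀ = false)
    (p : Fin n) : sState init delivered p = false := by
  rw [sState, if_neg]
  rintro ⟨-, hcommit⟩
  simp [hcommit q₀] at hq₀

theorem decA_eq_false_of_delivered {n : ℕ} {init : Fin n → Bool}
    {delivered : Fin 2 → Fin n → Fin n → Prop} {q p : Fin n} (hqp : delivered 1 q p)
    (hq : sState init delivered q = false) : decA init delivered p = false := by
  rw [decA, if_neg]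
  intro hall
  simp [hall q hqp] at hq

theorem consistentDel.delivered_of_crash_eq_none_s13 {n : ℕ} {crash : Fin n → Option (Fin 2)}
    {delivered : Fin 2 → Fin n → Fin n → Prop} (hcons : consistentDel crash delivered)
    (t : Fin 2) {q : Fin n} (hq : crash q = none) (p : Fin n) : delivered t q p :=
  hcons.1 t q p (Or.inl hq)

theorem stmt_13_general (n : ℕ)
    (init : Fin n → Bool) (q₀ : Fin n) (hq₀ : init q₀ = false) :
    ∀ crash : Fin n → Option (Fin 2),
      (Finset.univ.filter fun q => crash q ≠ none).card ≤ 1 →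
      ∀ delivered : Fin 2 → Fin n → Fin n → Prop,
        consistentDel crash delivered →
        ∀ p : Fin n, crash p = none → decA init delivered p = false := by
  intro crash _ delivered hcons p hp
  -- a surviving process receives its own round-2 message, which carries internal:b
  exact decA_eq_false_of_delivered (hcons.delivered_of_crash_eq_none_s13 1 hp p)
    (sState_eq_false_of_init_eq_false delivered hq₀ p)

/-- Abort validity for Algorithm 1, property P3. -/
theorem stmt_13 (n : ℕ) (hn : 1 ≤ n)
    (init : Fin n → Bool) (q₀ : Fin n) (hq₀ : init q₀ = false) :
    ∀ crash : Fin n → Option (Fin 2),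
      (Finset.univ.filter fun q => crash q ≠ none).card ≤ 1 →
      ∀ delivered : Fin 2 → Fin n → Fin n → Prop,
        consistentDel crash delivered →
        ∀ p : Fin n, crash p = none → decA init delivered p = false :=
  stmt_13_general n init q₀ hq₀
end
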